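/- arXiv:math-ph/0304024 — 2 statements merged into one kernel-verified Lean document; each statement's English description precedes it below -/
import Mathlib

section
/- With the maximal correlation coefficient r(t) as above, for any mean-zero g_s ∈ L²(F^+_{z+s}) and g_t ∈ L²(F^+_{z+t}) with s,t ≥ 0, the conditional expectations h_s = E[g_s|F_z], h_t = E[g_t|F_z] satisfy |E[h_s h_t]| ≤ r(s) r(t) E^{1/2}[g_s²] E^{1/2}[g_t²]. -/
/-!
By Cauchy–Schwarz, `|E[h_s h_t]| ≤ ‖h_s‖₂ ‖h_t‖₂`, so it suffices that `‖h_u‖₂ ≤ r(u) ‖g_u‖₂`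
for `h_u = E[g_u | F_z]`. The tower property gives `‖h_u‖₂² = E[h_u g_u]`, and `h_u` is
`F_z`-measurable with mean zero, so normalising `h_u` and `g_u` to unit variance yields a
competitor in the supremum defining `r(u)` whose correlation is `‖h_u‖₂ / ‖g_u‖₂`.
-/

open MeasureTheory

namespace MeasureTheory

variable {Ω : Type*} {m m' mΩ : MeasurableSpace Ω} {μ : Measure Ω}

lemma abs_integral_mul_le_sqrt_mul_sqrt {f g : Ω → ℝ} (hf : MemLp f 2 μ) (hg : MemLp g 2 μ) :
    |∫ ω, f ω * g ω ∂μ| ≤ √(∫ ω, f ω ^ 2 ∂μ) * √(∫ ω, g ω ^ 2 ∂μ) := by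
  have hf' : MemLp f (ENNReal.ofReal 2) μ := by simpa using hf
  have hg' : MemLp g (ENNReal.ofReal 2) μ := by simpa using hg
  have holder := integral_mul_norm_le_Lp_mul_Lq Real.HolderConjugate.two_two hf' hg'
  simp only [Real.norm_eq_abs, Real.rpow_two, sq_abs, ← Real.sqrt_eq_rpow] at holder
  calc |∫ ω, f ω * g ω ∂μ| ≤ ∫ ω, |f ω| * |g ω| ∂μ := by
        simpa only [Real.norm_eq_abs, abs_mul] using
          norm_integral_le_integral_norm (fun ω => f ω * g ω)
    _ ≤ _ := holder

variable (m m' μ) in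
def correlationSet : Set ℝ :=
  {c : ℝ | ∃ h g : Ω → ℝ,
    StronglyMeasurable[m] h ∧ MemLp h 2 μ ∧ (∫ ω, h ω ∂μ) = 0 ∧ (∫ ω, (h ω) ^ 2 ∂μ) = 1 ∧
    StronglyMeasurable[m'] g ∧ MemLp g 2 μ ∧ (∫ ω, g ω ∂μ) = 0 ∧ (∫ ω, (g ω) ^ 2 ∂μ) = 1 ∧
    c = ∫ ω, h ω * g ω ∂μ}

variable (m m' μ) in
noncomputable def maxCorrelation : ℝ :=
  sSup (correlationSet m m' μ)

lemma correlationSet_bddAbove : BddAbove (correlationSet m m' μ) := by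
  refine ⟨1, ?_⟩
  rintro _ ⟨h, g, -, hh2, -, hh1, -, hg2, -, hg1, rfl⟩
  calc ∫ ω, h ω * g ω ∂μ ≤ |∫ ω, h ω * g ω ∂μ| := le_abs_self _
    _ ≤ √(∫ ω, h ω ^ 2 ∂μ) * √(∫ ω, g ω ^ 2 ∂μ) := abs_integral_mul_le_sqrt_mul_sqrt hh2 hg2
    _ = 1 := by rw [hh1, hg1, Real.sqrt_one, mul_one]

lemma neg_mem_correlationSet {c : ℝ} (hc : c ∈ correlationSet m m' μ) :
    -c ∈ correlationSet m m' μ := by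
  obtain ⟨h, g, hhm, hh2, hh0, hh1, hgm, hg2, hg0, hg1, rfl⟩ := hc
  refine ⟨-h, g, hhm.neg, hh2.neg, ?_, ?_, hgm, hg2, hg0, hg1, ?_⟩
  · simp only [Pi.neg_apply, integral_neg, hh0, neg_zero]
  · simpa only [Pi.neg_apply, neg_sq] using hh1
  · simp only [Pi.neg_apply, neg_mul, integral_neg]

lemma maxCorrelation_nonneg : 0 ≤ maxCorrelation m m' μ := by
  rcases (correlationSet m m' μ).eq_empty_or_nonempty with hempty | ⟨c, hc⟩
  · rw [maxCorrelation, hempty, Real.sSup_empty]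
  · have hle := le_csSup correlationSet_bddAbove hc
    have hle_neg := le_csSup correlationSet_bddAbove (neg_mem_correlationSet hc)
    rw [maxCorrelation]
    linarith

lemma integral_mul_div_mem_correlationSet {h g : Ω → ℝ}
    (hhm : StronglyMeasurable[m] h) (hh2 : MemLp h 2 μ) (hh0 : ∫ ω, h ω ∂μ = 0)
    (hgm : StronglyMeasurable[m'] g) (hg2 : MemLp g 2 μ) (hg0 : ∫ ω, g ω ∂μ = 0)
    (hA : √(∫ ω, h ω ^ 2 ∂μ) ≠ 0) (hB : √(∫ ω, g ω ^ 2 ∂μ) ≠ 0) :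
    (∫ ω, h ω * g ω ∂μ) / (√(∫ ω, h ω ^ 2 ∂μ) * √(∫ ω, g ω ^ 2 ∂μ)) ∈
      correlationSet m m' μ := by
  set A := √(∫ ω, h ω ^ 2 ∂μ)
  set B := √(∫ ω, g ω ^ 2 ∂μ)
  have hA2 : ∫ ω, h ω ^ 2 ∂μ = A ^ 2 := (Real.sq_sqrt (integral_nonneg fun _ => sq_nonneg _)).symm
  have hB2 : ∫ ω, g ω ^ 2 ∂μ = B ^ 2 := (Real.sq_sqrt (integral_nonneg fun _ => sq_nonneg _)).symm
  refine ⟨fun ω => A⁻¹ * h ω, fun ω => B⁻¹ * g ω, hhm.const_mul _, hh2.const_mul _, ?_, ?_,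
    hgm.const_mul _, hg2.const_mul _, ?_, ?_, ?_⟩
  · rw [integral_const_mul, hh0, mul_zero]
  · simp only [mul_pow, integral_const_mul, hA2]
    field_simp
  · rw [integral_const_mul, hg0, mul_zero]
  · simp only [mul_pow, integral_const_mul, hB2]
    field_simp
  · have hrescale : ∀ ω, A⁻¹ * h ω * (B⁻¹ * g ω) = (A * B)⁻¹ * (h ω * g ω) := fun ω => by ring
    simp only [hrescale, integral_const_mul, div_eq_inv_mul]

variable [IsFiniteMeasure μ]

lemma integral_condExp_mul_self (hm : m ≤ mΩ) {g : Ω → ℝ} (hg : MemLp g 2 μ) :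
    ∫ ω, μ[g | m] ω * g ω ∂μ = ∫ ω, μ[g | m] ω ^ 2 ∂μ := by
  have hprod : Integrable (μ[g | m] * g) μ := (hg.condExp one_le_two).integrable_mul hg
  have hpull := condExp_mul_of_stronglyMeasurable_left stronglyMeasurable_condExp hprod
    (hg.integrable one_le_two)
  calc ∫ ω, μ[g | m] ω * g ω ∂μ = ∫ ω, μ[μ[g | m] * g | m] ω ∂μ := (integral_condExp hm).symm
    _ = ∫ ω, μ[g | m] ω ^ 2 ∂μ := integral_congr_ae (hpull.mono fun ω hω => by
        rw [hω, Pi.mul_apply, ← sq])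

lemma sqrt_integral_condExp_sq_le (hm : m ≤ mΩ) {g : Ω → ℝ}
    (hgm : StronglyMeasurable[m'] g) (hg2 : MemLp g 2 μ) (hg0 : ∫ ω, g ω ∂μ = 0) :
    √(∫ ω, μ[g | m] ω ^ 2 ∂μ) ≤ maxCorrelation m m' μ * √(∫ ω, g ω ^ 2 ∂μ) := by
  set A := √(∫ ω, μ[g | m] ω ^ 2 ∂μ)
  set B := √(∫ ω, g ω ^ 2 ∂μ)
  have hh2 : MemLp (μ[g | m]) 2 μ := hg2.condExp one_le_two
  have hA2 : ∫ ω, μ[g | m] ω * g ω ∂μ = A ^ 2 := by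
    rw [integral_condExp_mul_self hm hg2, Real.sq_sqrt (integral_nonneg fun _ => sq_nonneg _)]
  obtain hA0 | hApos := (show 0 ≤ A from Real.sqrt_nonneg _).eq_or_lt'
  · rw [hA0]
    exact mul_nonneg maxCorrelation_nonneg (Real.sqrt_nonneg _)
  have hAB : A ^ 2 ≤ A * B :=
    hA2 ▸ (le_abs_self _).trans (abs_integral_mul_le_sqrt_mul_sqrt hh2 hg2)
  have hBpos : 0 < B := by nlinarith
  have hmem := integral_mul_div_mem_correlationSet stronglyMeasurable_condExp hh2
    (by rw [integral_condExp hm, hg0]) hgm hg2 hg0 hApos.ne' hBpos.ne'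
  rw [hA2, sq, mul_div_mul_left _ _ hApos.ne'] at hmem
  calc A = A / B * B := (div_mul_cancel₀ _ hBpos.ne').symm
    _ ≤ maxCorrelation m m' μ * B :=
      mul_le_mul_of_nonneg_right (le_csSup correlationSet_bddAbove hmem) hBpos.le

end MeasureTheory

theorem condexp_cross_correlation_general {Ω : Type*} [mΩ : MeasurableSpace Ω]
    (μ : Measure Ω) [IsProbabilityMeasure μ]
    (m : MeasurableSpace Ω) (hm : m ≤ mΩ)
    (mplus : ℝ → MeasurableSpace Ω)
    (r : ℝ → ℝ)
    (hr : ∀ u : ℝ, 0 ≤ u → r u = sSup {c : ℝ | ∃ h g : Ω → ℝ,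
      StronglyMeasurable[m] h ∧ MemLp h 2 μ ∧
        (∫ ω, h ω ∂μ) = 0 ∧ (∫ ω, (h ω) ^ 2 ∂μ) = 1 ∧
      StronglyMeasurable[mplus u] g ∧ MemLp g 2 μ ∧
        (∫ ω, g ω ∂μ) = 0 ∧ (∫ ω, (g ω) ^ 2 ∂μ) = 1 ∧
      c = ∫ ω, h ω * g ω ∂μ})
    (s t : ℝ) (hs : 0 ≤ s) (ht : 0 ≤ t)
    (gs gt : Ω → ℝ)
    (hgsm : StronglyMeasurable[mplus s] gs) (hgs2 : MemLp gs 2 μ)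
    (hgs0 : (∫ ω, gs ω ∂μ) = 0)
    (hgtm : StronglyMeasurable[mplus t] gt) (hgt2 : MemLp gt 2 μ)
    (hgt0 : (∫ ω, gt ω ∂μ) = 0) :
    |∫ ω, (μ[gs | m]) ω * (μ[gt | m]) ω ∂μ| ≤
      r s * r t * Real.sqrt (∫ ω, (gs ω) ^ 2 ∂μ) *
        Real.sqrt (∫ ω, (gt ω) ^ 2 ∂μ) := by
  have hs_bound : √(∫ ω, μ[gs | m] ω ^ 2 ∂μ) ≤ r s * √(∫ ω, gs ω ^ 2 ∂μ) :=
    hr s hs ▸ sqrt_integral_condExp_sq_le hm hgsm hgs2 hgs0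
  have ht_bound : √(∫ ω, μ[gt | m] ω ^ 2 ∂μ) ≤ r t * √(∫ ω, gt ω ^ 2 ∂μ) :=
    hr t ht ▸ sqrt_integral_condExp_sq_le hm hgtm hgt2 hgt0
  calc |∫ ω, μ[gs | m] ω * μ[gt | m] ω ∂μ|
      ≤ √(∫ ω, μ[gs | m] ω ^ 2 ∂μ) * √(∫ ω, μ[gt | m] ω ^ 2 ∂μ) :=
        abs_integral_mul_le_sqrt_mul_sqrt (hgs2.condExp one_le_two) (hgt2.condExp one_le_two)
    _ ≤ (r s * √(∫ ω, gs ω ^ 2 ∂μ)) * (r t * √(∫ ω, gt ω ^ 2 ∂μ)) :=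
        mul_le_mul hs_bound ht_bound (Real.sqrt_nonneg _) ((Real.sqrt_nonneg _).trans hs_bound)
    _ = r s * r t * √(∫ ω, gs ω ^ 2 ∂μ) * √(∫ ω, gt ω ^ 2 ∂μ) := by ring

/-- Cross-correlation bound for conditional expectations: for mean-zero
square-integrable `g_s`, `g_t` measurable w.r.t. the future σ-algebras,
`|E[h_s h_t]| ≤ r(s) r(t) E[g_s²]^{1/2} E[g_t²]^{1/2}` where
`h_u = E[g_u | F_z]` and `r(u)` is the maximal correlation coefficient. -/
theorem condexp_cross_correlation {Ω : Type*} [mΩ : MeasurableSpace Ω]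
    (μ : Measure Ω) [IsProbabilityMeasure μ]
    (m : MeasurableSpace Ω) (hm : m ≤ mΩ)
    (mplus : ℝ → MeasurableSpace Ω) (hmplus : ∀ u, mplus u ≤ mΩ)
    (r : ℝ → ℝ)
    (hr : ∀ u : ℝ, 0 ≤ u → r u = sSup {c : ℝ | ∃ h g : Ω → ℝ,
      StronglyMeasurable[m] h ∧ MemLp h 2 μ ∧
        (∫ ω, h ω ∂μ) = 0 ∧ (∫ ω, (h ω) ^ 2 ∂μ) = 1 ∧
      StronglyMeasurable[mplus u] g ∧ MemLp g 2 μ ∧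
        (∫ ω, g ω ∂μ) = 0 ∧ (∫ ω, (g ω) ^ 2 ∂μ) = 1 ∧
      c = ∫ ω, h ω * g ω ∂μ})
    (s t : ℝ) (hs : 0 ≤ s) (ht : 0 ≤ t)
    (gs gt : Ω → ℝ)
    (hgsm : StronglyMeasurable[mplus s] gs) (hgs2 : MemLp gs 2 μ)
    (hgs0 : (∫ ω, gs ω ∂μ) = 0)
    (hgtm : StronglyMeasurable[mplus t] gt) (hgt2 : MemLp gt 2 μ)
    (hgt0 : (∫ ω, gt ω ∂μ) = 0) :
    |∫ ω, (μ[gs | m]) ω * (μ[gt | m]) ω ∂μ| ≤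
      r s * r t * Real.sqrt (∫ ω, (gs ω) ^ 2 ∂μ) *
        Real.sqrt (∫ ω, (gt ω) ^ 2 ∂μ) :=
  condexp_cross_correlation_general (mΩ := mΩ) μ m hm mplus r hr s t hs ht gs gt hgsm hgs2 hgs0 hgtm
    hgt2 hgt0
end

section
/- Let Φ : ℝ^{d+1} → [0,∞) satisfy Φ(ξ,k) ≤ K (η² + |k|² + ξ²)^{−H−(d+1)/2} for |(ξ,k)| ≤ ρ and Φ = 0 for |(ξ,k)| ≥ ρ, with H ∈ (0,1), 0 < η ≤ 1 ≤ ρ. Then there is a constant C = C(K,d,H) such that ∫∫ |k|² Φ(ξ,k) dξ dk ≤ C (η^{2−2H} + ρ^{2−2H}). -/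
/-!
The norm on `ℝ × E` is the sup norm, which is at most `√(ξ² + ‖k‖²)`. Hence on the support
of `Φ` both `‖k‖²` and `max η ‖q‖²` are bounded by `S = η² + ‖k‖² + ξ²`, and since the
exponent `e` of `S` satisfies `e ≤ -1`, `‖k‖² Φ ≤ K S^(e+1) ≤ K max(η, ‖q‖)^(2e+2)`.
This radial majorant, truncated at `‖q‖ = ρ`, is integrated in polar coordinates in
dimension `d + 1`: with `s = 2 - 2H > 0`,
`∫₀^ρ r^d max(η, r)^(s-d-1) dr = η^s / (d+1) + (ρ^s - η^s) / s`.
-/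

open MeasureTheory Set

lemma norm_prod_le_sqrt {E : Type*} [SeminormedAddCommGroup E] (ξ : ℝ) (k : E) :
    ‖(ξ, k)‖ ≤ √(ξ ^ 2 + ‖k‖ ^ 2) := by
  rw [Prod.norm_def, Real.norm_eq_abs]
  refine max_le (Real.abs_le_sqrt (by nlinarith)) ?_
  simpa using Real.abs_le_sqrt (x := ‖k‖) (by nlinarith)

lemma sq_mul_rpow_le_rpow {x S M e : ℝ} (hM : 0 < M) (hMS : M ^ 2 ≤ S) (hxS : x ^ 2 ≤ S)
    (he : e ≤ -1) : x ^ 2 * S ^ e ≤ M ^ (2 * (e + 1)) := by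
  have hS : 0 < S := lt_of_lt_of_le (by positivity) hMS
  calc x ^ 2 * S ^ e ≤ S * S ^ e := by gcongr
    _ = S ^ (e + 1) := by rw [Real.rpow_add_one hS.ne']; ring
    _ ≤ (M ^ 2) ^ (e + 1) := Real.rpow_le_rpow_of_nonpos (by positivity) hMS (by linarith)
    _ = M ^ (2 * (e + 1)) := by rw [← Real.rpow_natCast, ← Real.rpow_mul hM.le]; norm_num

lemma sq_norm_snd_mul_le_indicator {E : Type*} [SeminormedAddCommGroup E] {K η ρ e : ℝ}
    {Φ : ℝ × E → ℝ} (hK : 0 ≤ K) (hη : 0 < η) (he : e ≤ -1)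
    (hΦle : ∀ ξ k, √(ξ ^ 2 + ‖k‖ ^ 2) ≤ ρ →
      Φ (ξ, k) ≤ K * (η ^ 2 + ‖k‖ ^ 2 + ξ ^ 2) ^ e)
    (hΦvanish : ∀ ξ k, ρ ≤ √(ξ ^ 2 + ‖k‖ ^ 2) → Φ (ξ, k) = 0) (q : ℝ × E) :
    ‖q.2‖ ^ 2 * Φ q ≤ (Iic ρ).indicator (fun r => K * max η r ^ (2 * (e + 1))) ‖q‖ := by
  obtain ⟨ξ, k⟩ := q
  rcases le_or_gt √(ξ ^ 2 + ‖k‖ ^ 2) ρ with hin | hout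
  · have hq : ‖(ξ, k)‖ ^ 2 ≤ ξ ^ 2 + ‖k‖ ^ 2 := by
      simpa [Real.sq_sqrt (by positivity : 0 ≤ ξ ^ 2 + ‖k‖ ^ 2)] using
        pow_le_pow_left₀ (norm_nonneg _) (norm_prod_le_sqrt ξ k) 2
    have hmax : max η ‖(ξ, k)‖ ^ 2 ≤ η ^ 2 + ‖k‖ ^ 2 + ξ ^ 2 := by
      rcases max_cases η ‖(ξ, k)‖ with ⟨h, _⟩ | ⟨h, _⟩ <;> rw [h] <;> nlinarith
    rw [indicator_of_mem (mem_Iic.2 ((norm_prod_le_sqrt ξ k).trans hin))]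
    calc ‖k‖ ^ 2 * Φ (ξ, k) ≤ ‖k‖ ^ 2 * (K * (η ^ 2 + ‖k‖ ^ 2 + ξ ^ 2) ^ e) := by
          gcongr; exact hΦle ξ k hin
      _ = K * (‖k‖ ^ 2 * (η ^ 2 + ‖k‖ ^ 2 + ξ ^ 2) ^ e) := by ring
      _ ≤ K * max η ‖(ξ, k)‖ ^ (2 * (e + 1)) := by
          gcongr
          exact sq_mul_rpow_le_rpow (lt_max_of_lt_left hη) hmax (by nlinarith) he
  · rw [hΦvanish ξ k hout.le, mul_zero]
    exact indicator_nonneg (fun r _ => by positivity) _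

section RadialIntegral

variable {E : Type*} [NormedAddCommGroup E] [NormedSpace ℝ E] [FiniteDimensional ℝ E]
  [MeasurableSpace E] [BorelSpace E] (μ : Measure E)

lemma integrable_indicator_Iic_comp_norm [IsFiniteMeasureOnCompacts μ] {h : ℝ → ℝ}
    (hh : Continuous h) (ρ : ℝ) : Integrable (fun x => (Iic ρ).indicator h ‖x‖) μ := by
  have hball : (fun x : E => (Iic ρ).indicator h ‖x‖) =
      (Metric.closedBall 0 ρ).indicator (fun x => h ‖x‖) := by
    ext x; by_cases hx : ‖x‖ ≤ ρ <;> simp [hx]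
  rw [hball, integrable_indicator_iff Metric.isClosed_closedBall.measurableSet]
  exact (hh.comp continuous_norm).continuousOn.integrableOn_compact (isCompact_closedBall 0 ρ)

lemma integral_comp_norm_eq [μ.IsAddHaarMeasure] {n : ℕ} (hn : Module.finrank ℝ E = n + 1)
    (f : ℝ → ℝ) :
    ∫ x, f ‖x‖ ∂μ = (n + 1) * μ.real (Metric.ball 0 1) * ∫ y in Ioi 0, y ^ n * f y := by
  have : Nontrivial E := Module.nontrivial_of_finrank_eq_succ hn
  rw [integral_fun_norm_addHaar μ f, hn, Nat.add_sub_cancel]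
  simp only [nsmul_eq_mul, smul_eq_mul]
  push_cast
  ring

end RadialIntegral

lemma integral_Ioi_pow_mul_indicator_max_rpow {d : ℕ} {K η ρ s : ℝ} (hη : 0 < η)
    (hηρ : η ≤ ρ) (hs : 0 < s) :
    ∫ y in Ioi 0, y ^ d * (Iic ρ).indicator (fun r => K * max η r ^ (s - (d + 1))) y =
      K * (η ^ s / (d + 1) + (ρ ^ s - η ^ s) / s) := by
  set a := s - (d + 1)
  have hG : Continuous fun y : ℝ => K * (y ^ d * max η y ^ a) :=
    continuous_const.mul ((continuous_pow d).mul
      ((continuous_const.max continuous_id).rpow_const fun y => Or.inl (lt_max_of_lt_left hη).ne'))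
  have htrunc : ∫ y in Ioi 0, y ^ d * (Iic ρ).indicator (fun r => K * max η r ^ a) y =
      ∫ y in (0)..ρ, K * (y ^ d * max η y ^ a) := by
    rw [setIntegral_eq_of_subset_of_forall_sdiff_eq_zero measurableSet_Ioi Ioc_subset_Ioi_self,
      intervalIntegral.integral_of_le (hη.le.trans hηρ)]
    · refine setIntegral_congr_fun measurableSet_Ioc fun y hy => ?_
      simp only [indicator_of_mem (mem_Iic.2 hy.2)]
      ring
    · rintro y ⟨hy0, hyρ⟩
      have : y ∉ Iic ρ := fun h => hyρ ⟨hy0, h⟩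
      simp [indicator_of_notMem this]
  have hlow : ∫ y in (0)..η, K * (y ^ d * max η y ^ a) = K * (η ^ s / (d + 1)) := by
    rw [intervalIntegral.integral_congr (g := fun y => K * η ^ a * y ^ d) fun y hy => by
      simp only [max_eq_left (uIcc_of_le hη.le ▸ hy).2]; ring]
    have hexp : η ^ a * η ^ (d + 1) = η ^ s := by
      rw [← Real.rpow_natCast, ← Real.rpow_add hη]; push_cast; congr 1; ring
    rw [intervalIntegral.integral_const_mul, integral_pow, zero_pow d.succ_ne_zero, sub_zero,
      ← hexp]
    ring
  have hhigh : ∫ y in η..ρ, K * (y ^ d * max η y ^ a) = K * ((ρ ^ s - η ^ s) / s) := by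
    rw [intervalIntegral.integral_congr (g := fun y => K * y ^ (s - 1)) fun y hy => by
      have hy := uIcc_of_le hηρ ▸ hy
      have hy0 : 0 < y := hη.trans_le hy.1
      simp only [max_eq_right hy.1, ← Real.rpow_natCast, ← Real.rpow_add hy0]
      congr 2; ring]
    rw [intervalIntegral.integral_const_mul, integral_rpow (Or.inl (by linarith))]
    simp
  rw [htrunc, ← intervalIntegral.integral_add_adjacent_intervals (hG.intervalIntegrable 0 η)
    (hG.intervalIntegrable η ρ), hlow, hhigh, mul_add]

lemma div_add_sub_div_le_one_add_inv_mul {X Y n s : ℝ} (hX : 0 ≤ X) (hY : 0 ≤ Y) (hn : 1 ≤ n)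
    (hs : 0 < s) : X / n + (Y - X) / s ≤ (1 + 1 / s) * (X + Y) := by
  have hXn : X / n ≤ X := div_le_self hX hn
  have hYX : (Y - X) / s ≤ Y / s := by gcongr; linarith
  have hXs : 0 ≤ X / s := by positivity
  have hexpand : (1 + 1 / s) * (X + Y) = X + Y / s + (Y + X / s) := by ring
  linarith

/-- Second-moment bound for a truncated power-law spectral density:
`∫∫ |k|² Φ(ξ,k) dξ dk ≤ C (η^{2−2H} + ρ^{2−2H})`. -/
theorem spectral_second_moment_bound (d : ℕ) (hd : 1 ≤ d) (K H : ℝ)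
    (hK : 0 < K) (hH : H ∈ Set.Ioo (0 : ℝ) 1) :
    ∃ C : ℝ, 0 < C ∧ ∀ (η ρ : ℝ), 0 < η → η ≤ 1 → 1 ≤ ρ →
      ∀ Φ : ℝ × EuclideanSpace ℝ (Fin d) → ℝ,
        (∀ q, 0 ≤ Φ q) →
        (∀ (ξ : ℝ) (k : EuclideanSpace ℝ (Fin d)),
          Real.sqrt (ξ ^ 2 + ‖k‖ ^ 2) ≤ ρ →
            Φ (ξ, k) ≤ K * (η ^ 2 + ‖k‖ ^ 2 + ξ ^ 2) ^ (-H - ((d : ℝ) + 1) / 2)) →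
        (∀ (ξ : ℝ) (k : EuclideanSpace ℝ (Fin d)),
          ρ ≤ Real.sqrt (ξ ^ 2 + ‖k‖ ^ 2) → Φ (ξ, k) = 0) →
        ∫ q : ℝ × EuclideanSpace ℝ (Fin d), ‖q.2‖ ^ 2 * Φ q ≤
          C * (η ^ (2 - 2 * H) + ρ ^ (2 - 2 * H)) := by
  obtain ⟨hH0, hH1⟩ := hH
  set V := ℝ × EuclideanSpace ℝ (Fin d)
  set s := 2 - 2 * H
  have hs : 0 < s := by linarith
  have hd' : (1 : ℝ) ≤ d := by exact_mod_cast hd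
  have : (volume : Measure V).IsAddHaarMeasure := by rw [Measure.volume_eq_prod]; infer_instance
  have hdim : Module.finrank ℝ V = d + 1 := by
    rw [Module.finrank_prod, finrank_euclideanSpace_fin, Module.finrank_self, add_comm]
  set c := (volume : Measure V).real (Metric.ball 0 1)
  have hc : 0 < c := ENNReal.toReal_pos (Metric.measure_ball_pos volume 0 one_pos).ne'
    measure_ball_lt_top.ne
  refine ⟨(d + 1) * c * K * (1 + 1 / s), by positivity,
    fun η ρ hη hη1 hρ Φ hΦ0 hΦle hΦvanish => ?_⟩
  set F := (Iic ρ).indicator fun r => K * max η r ^ (s - (d + 1))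
  have hF : Continuous fun r : ℝ => K * max η r ^ (s - (d + 1)) :=
    continuous_const.mul ((continuous_const.max continuous_id).rpow_const
      fun r => Or.inl (lt_max_of_lt_left hη).ne')
  have hpt (q : V) : ‖q.2‖ ^ 2 * Φ q ≤ F ‖q‖ := by
    have hexp : 2 * (-H - ((d : ℝ) + 1) / 2 + 1) = s - (d + 1) := by ring
    simpa only [hexp] using
      sq_norm_snd_mul_le_indicator hK.le hη (by linarith) hΦle hΦvanish q
  calc ∫ q : V, ‖q.2‖ ^ 2 * Φ q
      ≤ ∫ q : V, F ‖q‖ :=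
        integral_mono_of_nonneg (.of_forall fun q => mul_nonneg (by positivity) (hΦ0 q))
          (integrable_indicator_Iic_comp_norm volume hF ρ) (.of_forall hpt)
    _ = (d + 1) * c * (K * (η ^ s / (d + 1) + (ρ ^ s - η ^ s) / s)) := by
        rw [integral_comp_norm_eq volume hdim,
          integral_Ioi_pow_mul_indicator_max_rpow hη (hη1.trans hρ) hs]
    _ ≤ (d + 1) * c * (K * ((1 + 1 / s) * (η ^ s + ρ ^ s))) := by
        gcongr
        exact div_add_sub_div_le_one_add_inv_mul (by positivity) (by positivity) (by linarith) hs
    _ = (d + 1) * c * K * (1 + 1 / s) * (η ^ s + ρ ^ s) := by ring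
end
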